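/- (Non-metricity of the connection ^{v,τ}Γ.) Assume the duality relations hold on U. Then the covariant derivatives taken with respect to the connection ^{v,τ}Γ satisfy, at every point of U: (a) ∇_μ τ_ν = ω_{μν}; (b) ∇_α γ_{μν} = −(τ_μ Θ_{να} + τ_ν Θ_{μα}); (c) ∇_μ v^ν = Θ_{μσ} h^{σν} − v^ν ω_{μσ} v^σ; (d) ∇_α h^{μν} = (v^μ h^{νσ} + v^ν h^{μσ}) ω_{σα}; moreover Θ_{μν} v^ν = 0. Consequently: ∇_μ τ_ν = 0 and ∇_α h^{μν} = 0 everywhere if and only if ω_{μν} = 0 everywhere; and ∇_α γ_{μν} = 0 everywhere if and only if Θ_{μν} = 0 everywhere. -/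

import Mathlib

/-! Common setup: fields on an open subset `U` of `ℝ⁴`, coordinates indexed by `Fin 4`,
partial derivatives `pd`, covariant derivatives, torsion, the intrinsic objects
`ω`, `Θ`, the compatible connection `^{v,τ}Γ` and the Coriolis field. -/

abbrev Vec4 : Type := Fin 4 → ℝ
abbrev Tens1 : Type := Vec4 → Fin 4 → ℝ
abbrev Tens2 : Type := Vec4 → Fin 4 → Fin 4 → ℝ
abbrev Tens3 : Type := Vec4 → Fin 4 → Fin 4 → Fin 4 → ℝ

/-- μ-th partial derivative -/
noncomputable def pd (μ : Fin 4) (f : Vec4 → ℝ) (x : Vec4) : ℝ :=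
  fderiv ℝ f x (Pi.single μ 1)

/-- ∇_μ τ_ν := ∂_μ τ_ν − Γ^σ_{μν} τ_σ -/
noncomputable def covOne (Γ : Tens3) (τ : Tens1) (x : Vec4) (μ ν : Fin 4) : ℝ :=
  pd μ (fun y => τ y ν) x - ∑ σ, Γ x σ μ ν * τ x σ

/-- ∇_μ v^ν := ∂_μ v^ν + Γ^ν_{μσ} v^σ -/
noncomputable def covVec (Γ : Tens3) (v : Tens1) (x : Vec4) (μ ν : Fin 4) : ℝ :=
  pd μ (fun y => v y ν) x + ∑ σ, Γ x ν μ σ * v x σ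

/-- ∇_α γ_{μν} := ∂_α γ_{μν} − Γ^σ_{αμ} γ_{σν} − Γ^σ_{αν} γ_{μσ} -/
noncomputable def covLow (Γ : Tens3) (γ : Tens2) (x : Vec4) (α μ ν : Fin 4) : ℝ :=
  pd α (fun y => γ y μ ν) x - ∑ σ, Γ x σ α μ * γ x σ ν - ∑ σ, Γ x σ α ν * γ x μ σ

/-- ∇_α h^{μν} := ∂_α h^{μν} + Γ^μ_{ασ} h^{σν} + Γ^ν_{ασ} h^{μσ} -/
noncomputable def covUp (Γ : Tens3) (h : Tens2) (x : Vec4) (α μ ν : Fin 4) : ℝ :=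
  pd α (fun y => h y μ ν) x + ∑ σ, Γ x μ α σ * h x σ ν + ∑ σ, Γ x ν α σ * h x μ σ

/-- Torsion T^α_{μν} := Γ^α_{μν} − Γ^α_{νμ} -/
def torsion (Γ : Tens3) (x : Vec4) (α μ ν : Fin 4) : ℝ :=
  Γ x α μ ν - Γ x α ν μ

/-- ω_{μν} := (1/2)(∂_μ τ_ν − ∂_ν τ_μ) -/
noncomputable def omega2 (τ : Tens1) (x : Vec4) (μ ν : Fin 4) : ℝ :=
  (1/2) * (pd μ (fun y => τ y ν) x - pd ν (fun y => τ y μ) x)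

/-- Θ_{μν} := (1/2)(v^σ ∂_σ γ_{μν} + γ_{σν} ∂_μ v^σ + γ_{μσ} ∂_ν v^σ) -/
noncomputable def theta2 (v : Tens1) (γ : Tens2) (x : Vec4) (μ ν : Fin 4) : ℝ :=
  (1/2) * (∑ σ, v x σ * pd σ (fun y => γ y μ ν) x
    + ∑ σ, γ x σ ν * pd μ (fun y => v y σ) x
    + ∑ σ, γ x μ σ * pd ν (fun y => v y σ) x)

/-- The compatible connection ^{v,τ}Γ^α_{μν} -/
noncomputable def compatConn (v τ : Tens1) (γ h : Tens2) : Tens3 := fun x α μ ν =>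
  ∑ σ, h x α σ * ((1/2) * pd μ (fun y => γ y ν σ) x + (1/2) * pd ν (fun y => γ y μ σ) x
    - (1/2) * pd σ (fun y => γ y μ ν) x)
  + (1/2) * v x α * (pd μ (fun y => τ y ν) x + pd ν (fun y => τ y μ) x)

/-- Coriolis field κ_{μν} := (1/2)(γ_{να} ∇_μ v^α − γ_{μα} ∇_ν v^α) -/
noncomputable def coriolis (Γ : Tens3) (v : Tens1) (γ : Tens2) (x : Vec4) (μ ν : Fin 4) : ℝ :=
  (1/2) * (∑ α, γ x ν α * covVec Γ v x μ α - ∑ α, γ x μ α * covVec Γ v x ν α)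

/-- Smoothness of a rank-1 field on U -/
def Smooth1 (τ : Tens1) (U : Set Vec4) : Prop := ∀ ν, ContDiffOn ℝ (⊤ : ℕ∞) (fun x => τ x ν) U
/-- Smoothness of a rank-2 field on U -/
def Smooth2 (γ : Tens2) (U : Set Vec4) : Prop := ∀ μ ν, ContDiffOn ℝ (⊤ : ℕ∞) (fun x => γ x μ ν) U
/-- Smoothness of connection coefficients on U -/
def Smooth3 (Γ : Tens3) (U : Set Vec4) : Prop := ∀ α μ ν, ContDiffOn ℝ (⊤ : ℕ∞) (fun x => Γ x α μ ν) U

/-- Kronecker delta -/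
def kron (μ ν : Fin 4) : ℝ := if μ = ν then 1 else 0

/-- The duality relations: τ_μ v^μ = 1, h^{μν} τ_ν = 0, γ_{μν} v^ν = 0,
h^{μσ} γ_{σν} = δ^μ_ν − v^μ τ_ν, together with symmetry of γ and h. -/
def DualityOn (τ v : Tens1) (γ h : Tens2) (U : Set Vec4) : Prop :=
  ∀ x ∈ U, (∀ μ ν, γ x μ ν = γ x ν μ) ∧ (∀ μ ν, h x μ ν = h x ν μ) ∧
    (∑ μ, τ x μ * v x μ = 1) ∧
    (∀ μ, ∑ ν, h x μ ν * τ x ν = 0) ∧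
    (∀ μ, ∑ ν, γ x μ ν * v x ν = 0) ∧
    (∀ μ ν, ∑ σ, h x μ σ * γ x σ ν = kron μ ν - v x μ * τ x ν)

lemma kron_sum (ν : Fin 4) (f : Fin 4 → ℝ) : ∑ σ, kron ν σ * f σ = f ν := by
  simp [kron, ite_mul]

lemma kron_sum' (ν : Fin 4) (f : Fin 4 → ℝ) : ∑ σ, kron σ ν * f σ = f ν := by
  simp [kron, ite_mul]

lemma pd_congr {f g : Vec4 → ℝ} {x : Vec4} (hfg : f =ᶠ[nhds x] g) (β : Fin 4) :
    pd β f x = pd β g x := by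
  unfold pd; rw [Filter.EventuallyEq.fderiv_eq hfg]

lemma pd_const (c : ℝ) (β : Fin 4) (x : Vec4) : pd β (fun _ => c) x = 0 := by
  simp [pd]

lemma pd_sum_mul (β : Fin 4) (f g : Vec4 → Fin 4 → ℝ) (x : Vec4)
    (hf : ∀ i, DifferentiableAt ℝ (fun y => f y i) x)
    (hg : ∀ i, DifferentiableAt ℝ (fun y => g y i) x) :
    pd β (fun y => ∑ i, f y i * g y i) x
      = ∑ i, (pd β (fun y => f y i) x * g x i + f x i * pd β (fun y => g y i) x) := by
  unfold pd
  rw [fderiv_fun_sum (A := fun i y => f y i * g y i) (fun i _ => ((hf i).mul (hg i)))]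
  rw [ContinuousLinearMap.sum_apply]
  refine Finset.sum_congr rfl fun i _ => ?_
  rw [fderiv_fun_mul (hf i) (hg i)]
  simp only [ContinuousLinearMap.add_apply, ContinuousLinearMap.smul_apply, smul_eq_mul]
  ring

lemma pd_const_sub_mul (c : ℝ) {f g : Vec4 → ℝ} (β : Fin 4) (x : Vec4)
    (hf : DifferentiableAt ℝ f x) (hg : DifferentiableAt ℝ g x) :
    pd β (fun y => c - f y * g y) x = -(pd β f x * g x + f x * pd β g x) := by
  unfold pd
  rw [fderiv_fun_sub (g := fun y => f y * g y) (differentiableAt_const c) (hf.mul hg)]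
  rw [fderiv_fun_mul hf hg]
  simp only [fderiv_fun_const, Pi.zero_apply, zero_sub, ContinuousLinearMap.neg_apply,
    ContinuousLinearMap.add_apply, ContinuousLinearMap.smul_apply, smul_eq_mul]
  ring

section
variable (T V : Fin 4 → ℝ) (G H : Fin 4 → Fin 4 → ℝ)

lemma hgf (hHG : ∀ μ ν, ∑ σ, H μ σ * G σ ν = kron μ ν - V μ * T ν)
    (ν : Fin 4) (f : Fin 4 → ℝ) :
    ∑ σ, (∑ ρ, H ν ρ * G ρ σ) * f σ = f ν - V ν * ∑ σ, T σ * f σ := by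
  have h1 : ∀ σ ∈ Finset.univ, (∑ ρ, H ν ρ * G ρ σ) * f σ
      = kron ν σ * f σ - V ν * (T σ * f σ) := by
    intro σ _; rw [hHG]; ring
  rw [Finset.sum_congr rfl h1, Finset.sum_sub_distrib, ← Finset.mul_sum, kron_sum]

lemma hgfB (hHs : ∀ i j, H i j = H j i)
    (hHG : ∀ μ ν, ∑ σ, H μ σ * G σ ν = kron μ ν - V μ * T ν)
    (ν : Fin 4) (f : Fin 4 → ℝ) :
    ∑ σ, (∑ ρ, H σ ρ * f ρ) * G σ ν = f ν - T ν * ∑ ρ, V ρ * f ρ := by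
  have h0 : ∀ ρ, ∑ σ, H σ ρ * G σ ν = kron ρ ν - V ρ * T ν := by
    intro ρ
    rw [Finset.sum_congr rfl fun σ _ => by rw [hHs σ ρ]]
    exact hHG ρ ν
  calc ∑ σ, (∑ ρ, H σ ρ * f ρ) * G σ ν
      = ∑ σ, ∑ ρ, f ρ * (H σ ρ * G σ ν) := by
        refine Finset.sum_congr rfl fun σ _ => ?_
        rw [Finset.sum_mul]; exact Finset.sum_congr rfl fun ρ _ => by ring
    _ = ∑ ρ, f ρ * (∑ σ, H σ ρ * G σ ν) := by
        rw [Finset.sum_comm]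
        exact Finset.sum_congr rfl fun ρ _ => by rw [Finset.mul_sum]
    _ = ∑ ρ, (f ρ * kron ρ ν - T ν * (V ρ * f ρ)) := by
        refine Finset.sum_congr rfl fun ρ _ => ?_
        rw [h0]; ring
    _ = f ν - T ν * ∑ ρ, V ρ * f ρ := by
        rw [Finset.sum_sub_distrib, ← Finset.mul_sum]
        congr 1
        rw [Finset.sum_congr rfl fun ρ _ => mul_comm (f ρ) (kron ρ ν), kron_sum']
end


section AlgebraCore
variable (T V : Fin 4 → ℝ) (G H : Fin 4 → Fin 4 → ℝ)
  (dT dV : Fin 4 → Fin 4 → ℝ) (dG dH : Fin 4 → Fin 4 → Fin 4 → ℝ)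

set_option maxHeartbeats 1000000 in
lemma lemA (hHs : ∀ i j, H i j = H j i) (hTV : ∑ i, T i * V i = 1)
    (hHT : ∀ i, ∑ j, H i j * T j = 0) (μ ν : Fin 4) :
    dT μ ν - ∑ σ, ((∑ ρ, H σ ρ * ((1/2) * dG μ ν ρ + (1/2) * dG ν μ ρ - (1/2) * dG ρ μ ν)) + (1/2) * V σ * (dT μ ν + dT ν μ)) * T σ = ((1/2) * (dT μ ν - dT ν μ)) := by
  simp only [Fin.sum_univ_four] at hTV hHT ⊢
  linear_combination (((-1) * (T 0 * ((((1/2) * dG μ ν 0) + ((1/2) * dG ν μ 0)) + ((-1/2) * dG 0 μ ν))))) * (hHs 0 0) + (((-1) * (T 0 * ((((1/2) * dG μ ν 1) + ((1/2) * dG ν μ 1)) + ((-1/2) * dG 1 μ ν))))) * (hHs 0 1) + (((-1) * (T 0 * ((((1/2) * dG μ ν 2) + ((1/2) * dG ν μ 2)) + ((-1/2) * dG 2 μ ν))))) * (hHs 0 2) + (((-1) * (T 0 * ((((1/2) * dG μ ν 3) + ((1/2) * dG ν μ 3)) + ((-1/2) * dG 3 μ ν))))) * (hHs 0 3) + (((-1)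 * (T 1 * ((((1/2) * dG μ ν 0) + ((1/2) * dG ν μ 0)) + ((-1/2) * dG 0 μ ν))))) * (hHs 1 0) + (((-1) * (T 1 * ((((1/2) * dG μ ν 1) + ((1/2) * dG ν μ 1)) + ((-1/2) * dG 1 μ ν))))) * (hHs 1 1) + (((-1) * (T 1 * ((((1/2) * dG μ ν 2) + ((1/2) * dG ν μ 2)) + ((-1/2) * dG 2 μ ν))))) * (hHs 1 2) + (((-1) * (T 1 * ((((1/2) * dG μ ν 3) + ((1/2) * dG ν μ 3)) + ((-1/2) * dG 3 μ ν))))) * (hHs 1 3) + (((-1) * (T 2 * ((((1/2) * dG μ ν 0) + ((1/2) * dG ν μ 0)) + ((-1/2) * dG 0 μ ν))))) * (hHs 2 0) + (((-1) * (T 2 * ((((1/2) * dG μ ν 1) + ((1/2) * dG ν μ 1)) + ((-1/2) * dG 1 μ ν))))) * (hHs 2 1) + (((-1) * (T 2 * ((((1/2) * dG μ ν 2) + ((1/2) * dG ν μ 2)) + ((-1/2) * dG 2 μ ν))))) * (hHs 2 2) + (((-1) * (T 2 * ((((1/2) * dG μ ν 3) + ((1/2) * dG ν μ 3)) + ((-1/2)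 * dG 3 μ ν))))) * (hHs 2 3) + (((-1) * (T 3 * ((((1/2) * dG μ ν 0) + ((1/2) * dG ν μ 0)) + ((-1/2) * dG 0 μ ν))))) * (hHs 3 0) + (((-1) * (T 3 * ((((1/2) * dG μ ν 1) + ((1/2) * dG ν μ 1)) + ((-1/2) * dG 1 μ ν))))) * (hHs 3 1) + (((-1) * (T 3 * ((((1/2) * dG μ ν 2) + ((1/2) * dG ν μ 2)) + ((-1/2) * dG 2 μ ν))))) * (hHs 3 2) + (((-1) * (T 3 * ((((1/2) * dG μ ν 3) + ((1/2) * dG ν μ 3)) + ((-1/2) * dG 3 μ ν))))) * (hHs 3 3) + (((-1) * ((((1/2) * dG μ ν 0) + ((1/2) * dG ν μ 0)) + ((-1/2) * dG 0 μ ν)))) * (hHT 0) + (((-1) * ((((1/2) * dG μ ν 1) + ((1/2) * dG ν μ 1)) + ((-1/2) * dG 1 μ ν)))) * (hHT 1) + (((-1) * ((((1/2) * dG μ ν 2) + ((1/2) * dG ν μ 2)) + ((-1/2) * dG 2 μ ν)))) * (hHT 2) + (((-1) * ((((1/2) * dG μ ν 3) + ((1/2) * dG ν μ 3)) + ((-1/2)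 * dG 3 μ ν)))) * (hHT 3) + (((-1/2) * (dT μ ν + dT ν μ))) * (hTV)

set_option maxHeartbeats 1000000 in
lemma lemB (hGs : ∀ i j, G i j = G j i) (hHs : ∀ i j, H i j = H j i)
    (hGV : ∀ i, ∑ j, G i j * V j = 0)
    (hHG : ∀ μ ν, ∑ σ, H μ σ * G σ ν = kron μ ν - V μ * T ν)
    (hD3 : ∀ b m, ∑ s, (dG b m s * V s + G m s * dV b s) = 0)
    (hdGs : ∀ b i j, dG b i j = dG b j i) (α μ ν : Fin 4) :
    dG α μ ν - ∑ σ, ((∑ ρ, H σ ρ * ((1/2) * dG α μ ρ + (1/2) * dG μ α ρ - (1/2) * dG ρ α μ)) + (1/2) * V σ * (dT α μ + dT μ α)) * G σ ν - ∑ σ, ((∑ ρ, H σ ρ * ((1/2) * dG α ν ρ + (1/2) * dG ν α ρ - (1/2) * dG ρ α ν)) + (1/2) * V σ * (dT α ν + dT ν α)) * G μ σ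
      = -(T μ * ((1/2) * (∑ ρ, V ρ * dG ρ ν α + ∑ ρ, G ρ α * dV ν ρ + ∑ ρ, G ν ρ * dV α ρ)) + T ν * ((1/2) * (∑ ρ, V ρ * dG ρ μ α + ∑ ρ, G ρ α * dV μ ρ + ∑ ρ, G μ ρ * dV α ρ))) := by
  have hb1 := hgfB T V G H hHs hHG ν
    (fun r => (1/2) * dG α μ r + (1/2) * dG μ α r - (1/2) * dG r α μ)
  have hb2 := hgfB T V G H hHs hHG μ
    (fun r => (1/2) * dG α ν r + (1/2) * dG ν α r - (1/2) * dG r α ν)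
  simp only [Fin.sum_univ_four] at hGV hD3 hb1 hb2 ⊢
  linear_combination (((-1) * 1)) * (hb1) + (((-1) * 1)) * (hb2) + (((-1) * ((H 0 0 * ((((1/2) * dG α ν 0) + ((1/2) * dG ν α 0)) + ((-1/2) * dG 0 α ν))) + (H 0 1 * ((((1/2) * dG α ν 1) + ((1/2) * dG ν α 1)) + ((-1/2) * dG 1 α ν))) + (H 0 2 * ((((1/2) * dG α ν 2) + ((1/2) * dG ν α 2)) + ((-1/2) * dG 2 α ν))) + (H 0 3 * ((((1/2) * dG α ν 3) + ((1/2) * dG ν α 3)) + ((-1/2) * dG 3 α ν)))))) * (hGs μ 0) + (((-1) * ((H 1 0 * ((((1/2) * dG α ν 0) + ((1/2) * dG ν α 0)) + ((-1/2) * dG 0 α ν))) + (H 1 1 * ((((1/2) * dG α ν 1) + ((1/2) * dG ν α 1)) + ((-1/2) * dG 1 α ν))) + (H 1 2 * ((((1/2) * dG α ν 2) + ((1/2) * dG ν α 2)) + ((-1/2) * dG 2 α ν))) + (H 1 3 * ((((1/2) * dG α ν 3) + ((1/2) * dG ν α 3)) + ((-1/2) * dG 3 α ν)))))) * (hGs μ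 1) + (((-1) * ((H 2 0 * ((((1/2) * dG α ν 0) + ((1/2) * dG ν α 0)) + ((-1/2) * dG 0 α ν))) + (H 2 1 * ((((1/2) * dG α ν 1) + ((1/2) * dG ν α 1)) + ((-1/2) * dG 1 α ν))) + (H 2 2 * ((((1/2) * dG α ν 2) + ((1/2) * dG ν α 2)) + ((-1/2) * dG 2 α ν))) + (H 2 3 * ((((1/2) * dG α ν 3) + ((1/2) * dG ν α 3)) + ((-1/2) * dG 3 α ν)))))) * (hGs μ 2) + (((-1) * ((H 3 0 * ((((1/2) * dG α ν 0) + ((1/2) * dG ν α 0)) + ((-1/2) * dG 0 α ν))) + (H 3 1 * ((((1/2) * dG α ν 1) + ((1/2) * dG ν α 1)) + ((-1/2) * dG 1 α ν))) + (H 3 2 * ((((1/2) * dG α ν 2) + ((1/2) * dG ν α 2)) + ((-1/2) * dG 2 α ν))) + (H 3 3 * ((((1/2) * dG α ν 3) + ((1/2) * dG ν α 3)) + ((-1/2) * dG 3 α ν)))))) * (hGs μ 3) + (((-1/2) * (dT α μ + dT μ α))) * (hGV ν) + (((-1/2) * ((dT α μ + dT μ α) * V 0))) * (hGs 0 ν)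 + (((-1/2) * ((dT α μ + dT μ α) * V 1))) * (hGs 1 ν) + (((-1/2) * ((dT α μ + dT μ α) * V 2))) * (hGs 2 ν) + (((-1/2) * ((dT α μ + dT μ α) * V 3))) * (hGs 3 ν) + (((-1/2) * (dT α ν + dT ν α))) * (hGV μ) + (((1/2) * T ν)) * (hD3 α μ) + (((1/2) * T ν)) * (hD3 μ α) + (((1/2) * (T ν * V 0))) * (hdGs 0 μ α) + (((1/2) * (T ν * V 1))) * (hdGs 1 μ α) + (((1/2) * (T ν * V 2))) * (hdGs 2 μ α) + (((1/2) * (T ν * V 3))) * (hdGs 3 μ α) + (((1/2) * (T ν * dV μ 0))) * (hGs 0 α) + (((1/2) * (T ν * dV μ 1))) * (hGs 1 α) + (((1/2) * (T ν * dV μ 2))) * (hGs 2 α) + (((1/2) * (T ν * dV μ 3))) * (hGs 3 α) + (((1/2) * T μ)) * (hD3 α ν) + (((1/2) * T μ)) * (hD3 ν α) + (((1/2) * (T μ * V 0))) * (hdGs 0 ν α) + (((1/2) * (T μ * V 1))) * (hdGs 1 ν α) + (((1/2) * (T μ * V 2))) * (hdGs 2 ν α) + (((1/2) * (T μ * V 3)))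 * (hdGs 3 ν α) + (((1/2) * (T μ * dV ν 0))) * (hGs 0 α) + (((1/2) * (T μ * dV ν 1))) * (hGs 1 α) + (((1/2) * (T μ * dV ν 2))) * (hGs 2 α) + (((1/2) * (T μ * dV ν 3))) * (hGs 3 α) + (((1/2) * 1)) * (hdGs α μ ν)

set_option maxHeartbeats 1000000 in
lemma lemC (hGs : ∀ i j, G i j = G j i) (hHs : ∀ i j, H i j = H j i)
    (hHG : ∀ μ ν, ∑ σ, H μ σ * G σ ν = kron μ ν - V μ * T ν)
    (hD1 : ∀ b, ∑ i, (dT b i * V i + T i * dV b i) = 0)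
    (hD3 : ∀ b m, ∑ s, (dG b m s * V s + G m s * dV b s) = 0)
    (hdGs : ∀ b i j, dG b i j = dG b j i) (μ ν : Fin 4) :
    dV μ ν + ∑ σ, ((∑ ρ, H ν ρ * ((1/2) * dG μ σ ρ + (1/2) * dG σ μ ρ - (1/2) * dG ρ μ σ)) + (1/2) * V ν * (dT μ σ + dT σ μ)) * V σ
      = (∑ σ, ((1/2) * (∑ ρ, V ρ * dG ρ μ σ + ∑ ρ, G ρ σ * dV μ ρ + ∑ ρ, G μ ρ * dV σ ρ)) * H σ ν) - V ν * ∑ σ, ((1/2) * (dT μ σ - dT σ μ)) * V σ := by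
  have hg1 := hgf T V G H hHG ν (fun s => dV μ s)
  simp only [Fin.sum_univ_four] at hD1 hD3 hg1 ⊢
  linear_combination (((1/2) * (H ν 0 * V 0))) * (hdGs μ 0 0) + (((1/2) * (H ν 0 * V 1))) * (hdGs μ 1 0) + (((1/2) * (H ν 0 * V 2))) * (hdGs μ 2 0) + (((1/2) * (H ν 0 * V 3))) * (hdGs μ 3 0) + (((1/2) * H ν 0)) * (hD3 μ 0) + (((-1/2) * H ν 0)) * (hD3 0 μ) + (((-1/2) * (H ν 0 * dV μ 0))) * (hGs 0 0) + (((-1/2) * (H ν 0 * dV μ 1))) * (hGs 1 0) + (((-1/2) * (H ν 0 * dV μ 2))) * (hGs 2 0) + (((-1/2) * (H ν 0 * dV μ 3))) * (hGs 3 0) + (((1/2) * (H ν 1 * V 0))) * (hdGs μ 0 1) + (((1/2) * (H ν 1 * V 1))) * (hdGs μ 1 1) + (((1/2) * (H ν 1 * V 2))) * (hdGs μ 2 1) + (((1/2) * (H ν 1 * V 3))) * (hdGs μ 3 1) + (((1/2) * H ν 1)) * (hD3 μ 1) + (((-1/2) * H ν 1)) * (hD3 1 μ) + (((-1/2) * (H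 ν 1 * dV μ 0))) * (hGs 0 1) + (((-1/2) * (H ν 1 * dV μ 1))) * (hGs 1 1) + (((-1/2) * (H ν 1 * dV μ 2))) * (hGs 2 1) + (((-1/2) * (H ν 1 * dV μ 3))) * (hGs 3 1) + (((1/2) * (H ν 2 * V 0))) * (hdGs μ 0 2) + (((1/2) * (H ν 2 * V 1))) * (hdGs μ 1 2) + (((1/2) * (H ν 2 * V 2))) * (hdGs μ 2 2) + (((1/2) * (H ν 2 * V 3))) * (hdGs μ 3 2) + (((1/2) * H ν 2)) * (hD3 μ 2) + (((-1/2) * H ν 2)) * (hD3 2 μ) + (((-1/2) * (H ν 2 * dV μ 0))) * (hGs 0 2) + (((-1/2) * (H ν 2 * dV μ 1))) * (hGs 1 2) + (((-1/2) * (H ν 2 * dV μ 2))) * (hGs 2 2) + (((-1/2) * (H ν 2 * dV μ 3))) * (hGs 3 2) + (((1/2) * (H ν 3 * V 0))) * (hdGs μ 0 3) + (((1/2) * (H ν 3 * V 1))) * (hdGs μ 1 3) + (((1/2) * (H ν 3 * V 2))) * (hdGs μ 2 3) + (((1/2) * (H ν 3 * V 3))) * (hdGs μ 3 3) + (((1/2)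 * H ν 3)) * (hD3 μ 3) + (((-1/2) * H ν 3)) * (hD3 3 μ) + (((-1/2) * (H ν 3 * dV μ 0))) * (hGs 0 3) + (((-1/2) * (H ν 3 * dV μ 1))) * (hGs 1 3) + (((-1/2) * (H ν 3 * dV μ 2))) * (hGs 2 3) + (((-1/2) * (H ν 3 * dV μ 3))) * (hGs 3 3) + (((-1) * 1)) * (hg1) + (((-1) * ((1/2) * ((((V 0 * dG 0 μ 0) + (V 1 * dG 1 μ 0) + (V 2 * dG 2 μ 0) + (V 3 * dG 3 μ 0)) + ((G 0 0 * dV μ 0) + (G 1 0 * dV μ 1) + (G 2 0 * dV μ 2) + (G 3 0 * dV μ 3))) + ((G μ 0 * dV 0 0) + (G μ 1 * dV 0 1) + (G μ 2 * dV 0 2) + (G μ 3 * dV 0 3)))))) * (hHs 0 ν) + (((-1) * ((1/2) * ((((V 0 * dG 0 μ 1) + (V 1 * dG 1 μ 1) + (V 2 * dG 2 μ 1) + (V 3 * dG 3 μ 1)) + ((G 0 1 * dV μ 0) + (G 1 1 * dV μ 1) + (G 2 1 * dV μ 2) + (G 3 1 * dV μ 3))) + ((G μ 0 * dV 1 0)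 + (G μ 1 * dV 1 1) + (G μ 2 * dV 1 2) + (G μ 3 * dV 1 3)))))) * (hHs 1 ν) + (((-1) * ((1/2) * ((((V 0 * dG 0 μ 2) + (V 1 * dG 1 μ 2) + (V 2 * dG 2 μ 2) + (V 3 * dG 3 μ 2)) + ((G 0 2 * dV μ 0) + (G 1 2 * dV μ 1) + (G 2 2 * dV μ 2) + (G 3 2 * dV μ 3))) + ((G μ 0 * dV 2 0) + (G μ 1 * dV 2 1) + (G μ 2 * dV 2 2) + (G μ 3 * dV 2 3)))))) * (hHs 2 ν) + (((-1) * ((1/2) * ((((V 0 * dG 0 μ 3) + (V 1 * dG 1 μ 3) + (V 2 * dG 2 μ 3) + (V 3 * dG 3 μ 3)) + ((G 0 3 * dV μ 0) + (G 1 3 * dV μ 1) + (G 2 3 * dV μ 2) + (G 3 3 * dV μ 3))) + ((G μ 0 * dV 3 0) + (G μ 1 * dV 3 1) + (G μ 2 * dV 3 2) + (G μ 3 * dV 3 3)))))) * (hHs 3 ν) + (V ν) * (hD1 μ)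

set_option maxHeartbeats 4000000 in
lemma lemD (hGs : ∀ i j, G i j = G j i) (hHs : ∀ i j, H i j = H j i)
    (hHT : ∀ i, ∑ j, H i j * T j = 0)
    (hHG : ∀ μ ν, ∑ σ, H μ σ * G σ ν = kron μ ν - V μ * T ν)
    (hD2 : ∀ b n, ∑ s, (dH b n s * T s + H n s * dT b s) = 0)
    (hD4 : ∀ b m n, ∑ s, (dH b m s * G s n + H m s * dG b s n) = -(dV b m * T n + V m * dT b n))
    (hdGs : ∀ b i j, dG b i j = dG b j i) (hdHs : ∀ b i j, dH b i j = dH b j i)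
    (α μ ν : Fin 4) :
    dH α μ ν + ∑ σ, ((∑ ρ, H μ ρ * ((1/2) * dG α σ ρ + (1/2) * dG σ α ρ - (1/2) * dG ρ α σ)) + (1/2) * V μ * (dT α σ + dT σ α)) * H σ ν + ∑ σ, ((∑ ρ, H ν ρ * ((1/2) * dG α σ ρ + (1/2) * dG σ α ρ - (1/2) * dG ρ α σ)) + (1/2) * V ν * (dT α σ + dT σ α)) * H μ σ
      = ∑ σ, (V μ * H ν σ + V ν * H μ σ) * ((1/2) * (dT σ α - dT α σ)) := by
  have hg1 := hgf T V G H hHG μ (fun s => dH α ν s)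
  have hg2 := hgf T V G H hHG ν (fun s => dH α μ s)
  simp only [Fin.sum_univ_four] at hHT hD2 hD4 hg1 hg2 ⊢
  linear_combination (((1/2) * (H μ 0 * dG α 0 0))) * (hHs 0 ν) + (((1/2) * (H μ 1 * dG α 0 1))) * (hHs 0 ν) + (((1/2) * (H μ 2 * dG α 0 2))) * (hHs 0 ν) + (((1/2) * (H μ 3 * dG α 0 3))) * (hHs 0 ν) + (((1/2) * (H μ 0 * dG α 1 0))) * (hHs 1 ν) + (((1/2) * (H μ 1 * dG α 1 1))) * (hHs 1 ν) + (((1/2) * (H μ 2 * dG α 1 2))) * (hHs 1 ν) + (((1/2) * (H μ 3 * dG α 1 3))) * (hHs 1 ν) + (((1/2) * (H μ 0 * dG α 2 0))) * (hHs 2 ν) + (((1/2) * (H μ 1 * dG α 2 1))) * (hHs 2 ν) + (((1/2) * (H μ 2 * dG α 2 2))) * (hHs 2 ν) + (((1/2) * (H μ 3 * dG α 2 3))) * (hHs 2 ν) + (((1/2) * (H μ 0 * dG α 3 0))) * (hHs 3 ν) + (((1/2) * (H μ 1 * dG α 3 1))) * (hHs 3 ν) + (((1/2) * (H μ 2 *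 dG α 3 2))) * (hHs 3 ν) + (((1/2) * (H μ 3 * dG α 3 3))) * (hHs 3 ν) + (((1/2) * H μ 0)) * (hD4 α ν 0) + (((1/2) * H μ 1)) * (hD4 α ν 1) + (((1/2) * H μ 2)) * (hD4 α ν 2) + (((1/2) * H μ 3)) * (hD4 α ν 3) + (((-1/2) * (H μ 0 * dH α ν 0))) * (hGs 0 0) + (((-1/2) * (H μ 1 * dH α ν 0))) * (hGs 0 1) + (((-1/2) * (H μ 2 * dH α ν 0))) * (hGs 0 2) + (((-1/2) * (H μ 3 * dH α ν 0))) * (hGs 0 3) + (((-1/2) * (H μ 0 * dH α ν 1))) * (hGs 1 0) + (((-1/2) * (H μ 1 * dH α ν 1))) * (hGs 1 1) + (((-1/2) * (H μ 2 * dH α ν 1))) * (hGs 1 2) + (((-1/2) * (H μ 3 * dH α ν 1))) * (hGs 1 3) + (((-1/2) * (H μ 0 * dH α ν 2))) * (hGs 2 0) + (((-1/2) * (H μ 1 * dH α ν 2))) * (hGs 2 1) + (((-1/2) * (H μ 2 * dH α ν 2))) * (hGs 2 2) + (((-1/2) * (H μ 3 * dH α ν 2))) * (hGs 2 3) + (((-1/2)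 * (H μ 0 * dH α ν 3))) * (hGs 3 0) + (((-1/2) * (H μ 1 * dH α ν 3))) * (hGs 3 1) + (((-1/2) * (H μ 2 * dH α ν 3))) * (hGs 3 2) + (((-1/2) * (H μ 3 * dH α ν 3))) * (hGs 3 3) + (((-1/2) * 1)) * (hg1) + (((1/2) * V μ)) * (hD2 α ν) + (((-1/2) * dV α ν)) * (hHT μ) + (((1/2) * (H μ 0 * H 0 ν))) * (hdGs 0 α 0) + (((1/2) * (H μ 1 * H 0 ν))) * (hdGs 0 α 1) + (((1/2) * (H μ 2 * H 0 ν))) * (hdGs 0 α 2) + (((1/2) * (H μ 3 * H 0 ν))) * (hdGs 0 α 3) + (((1/2) * (H μ 0 * H 1 ν))) * (hdGs 1 α 0) + (((1/2) * (H μ 1 * H 1 ν))) * (hdGs 1 α 1) + (((1/2) * (H μ 2 * H 1 ν))) * (hdGs 1 α 2) + (((1/2) * (H μ 3 * H 1 ν))) * (hdGs 1 α 3) + (((1/2) * (H μ 0 * H 2 ν))) * (hdGs 2 α 0) + (((1/2) * (H μ 1 * H 2 ν))) * (hdGs 2 α 1) + (((1/2) * (H μ 2 * H 2 ν))) * (hdGs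 2 α 2) + (((1/2) * (H μ 3 * H 2 ν))) * (hdGs 2 α 3) + (((1/2) * (H μ 0 * H 3 ν))) * (hdGs 3 α 0) + (((1/2) * (H μ 1 * H 3 ν))) * (hdGs 3 α 1) + (((1/2) * (H μ 2 * H 3 ν))) * (hdGs 3 α 2) + (((1/2) * (H μ 3 * H 3 ν))) * (hdGs 3 α 3) + (((1/2) * H 0 ν)) * (hD4 0 μ α) + (((1/2) * H 1 ν)) * (hD4 1 μ α) + (((1/2) * H 2 ν)) * (hD4 2 μ α) + (((1/2) * H 3 ν)) * (hD4 3 μ α) + (((-1/2) * (H μ 0 * dG 0 α 0))) * (hHs 0 ν) + (((-1/2) * (H μ 1 * dG 1 α 0))) * (hHs 0 ν) + (((-1/2) * (H μ 2 * dG 2 α 0))) * (hHs 0 ν) + (((-1/2) * (H μ 3 * dG 3 α 0))) * (hHs 0 ν) + (((-1/2) * (H μ 0 * dG 0 α 1))) * (hHs 1 ν) + (((-1/2) * (H μ 1 * dG 1 α 1))) * (hHs 1 ν) + (((-1/2) * (H μ 2 * dG 2 α 1))) * (hHs 1 ν) + (((-1/2) * (H μ 3 * dG 3 α 1))) * (hHs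 1 ν) + (((-1/2) * (H μ 0 * dG 0 α 2))) * (hHs 2 ν) + (((-1/2) * (H μ 1 * dG 1 α 2))) * (hHs 2 ν) + (((-1/2) * (H μ 2 * dG 2 α 2))) * (hHs 2 ν) + (((-1/2) * (H μ 3 * dG 3 α 2))) * (hHs 2 ν) + (((-1/2) * (H μ 0 * dG 0 α 3))) * (hHs 3 ν) + (((-1/2) * (H μ 1 * dG 1 α 3))) * (hHs 3 ν) + (((-1/2) * (H μ 2 * dG 2 α 3))) * (hHs 3 ν) + (((-1/2) * (H μ 3 * dG 3 α 3))) * (hHs 3 ν) + (((-1/2) * (H μ 0 * H ν 0))) * (hdGs 0 α 0) + (((-1/2) * (H μ 1 * H ν 0))) * (hdGs 1 α 0) + (((-1/2) * (H μ 2 * H ν 0))) * (hdGs 2 α 0) + (((-1/2) * (H μ 3 * H ν 0))) * (hdGs 3 α 0) + (((-1/2) * (H μ 0 * H ν 1))) * (hdGs 0 α 1) + (((-1/2) * (H μ 1 * H ν 1))) * (hdGs 1 α 1) + (((-1/2) * (H μ 2 * H ν 1))) * (hdGs 2 α 1) + (((-1/2) * (H μ 3 * H ν 1))) * (hdGs 3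 α 1) + (((-1/2) * (H μ 0 * H ν 2))) * (hdGs 0 α 2) + (((-1/2) * (H μ 1 * H ν 2))) * (hdGs 1 α 2) + (((-1/2) * (H μ 2 * H ν 2))) * (hdGs 2 α 2) + (((-1/2) * (H μ 3 * H ν 2))) * (hdGs 3 α 2) + (((-1/2) * (H μ 0 * H ν 3))) * (hdGs 0 α 3) + (((-1/2) * (H μ 1 * H ν 3))) * (hdGs 1 α 3) + (((-1/2) * (H μ 2 * H ν 3))) * (hdGs 2 α 3) + (((-1/2) * (H μ 3 * H ν 3))) * (hdGs 3 α 3) + (((-1/2) * H μ 0)) * (hD4 0 ν α) + (((-1/2) * H μ 1)) * (hD4 1 ν α) + (((-1/2) * H μ 2)) * (hD4 2 ν α) + (((-1/2) * H μ 3)) * (hD4 3 ν α) + (((1/2) * (V μ * dT α 0))) * (hHs 0 ν) + (((1/2) * (V μ * dT α 1))) * (hHs 1 ν) + (((1/2) * (V μ * dT α 2))) * (hHs 2 ν) + (((1/2) * (V μ * dT α 3))) * (hHs 3 ν) + ((((H ν 0 * ((((1/2) * dG α 0 0) + ((1/2) * dG 0 α 0)) + ((-1/2) * dG 0 α 0)))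 + (H ν 1 * ((((1/2) * dG α 0 1) + ((1/2) * dG 0 α 1)) + ((-1/2) * dG 1 α 0))) + (H ν 2 * ((((1/2) * dG α 0 2) + ((1/2) * dG 0 α 2)) + ((-1/2) * dG 2 α 0))) + (H ν 3 * ((((1/2) * dG α 0 3) + ((1/2) * dG 0 α 3)) + ((-1/2) * dG 3 α 0)))) + ((1/2) * (V ν * (dT α 0 + dT 0 α))))) * (hHs μ 0) + ((((H ν 0 * ((((1/2) * dG α 1 0) + ((1/2) * dG 1 α 0)) + ((-1/2) * dG 0 α 1))) + (H ν 1 * ((((1/2) * dG α 1 1) + ((1/2) * dG 1 α 1)) + ((-1/2) * dG 1 α 1))) + (H ν 2 * ((((1/2) * dG α 1 2) + ((1/2) * dG 1 α 2)) + ((-1/2) * dG 2 α 1))) + (H ν 3 * ((((1/2) * dG α 1 3) + ((1/2) * dG 1 α 3)) + ((-1/2) * dG 3 α 1)))) + ((1/2) * (V ν * (dT α 1 + dT 1 α))))) * (hHs μ 1) + ((((H ν 0 * ((((1/2) * dG α 2 0) + ((1/2) * dG 2 α 0)) + ((-1/2) * dG 0 α 2))) + (H ν 1 * ((((1/2) *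 dG α 2 1) + ((1/2) * dG 2 α 1)) + ((-1/2) * dG 1 α 2))) + (H ν 2 * ((((1/2) * dG α 2 2) + ((1/2) * dG 2 α 2)) + ((-1/2) * dG 2 α 2))) + (H ν 3 * ((((1/2) * dG α 2 3) + ((1/2) * dG 2 α 3)) + ((-1/2) * dG 3 α 2)))) + ((1/2) * (V ν * (dT α 2 + dT 2 α))))) * (hHs μ 2) + ((((H ν 0 * ((((1/2) * dG α 3 0) + ((1/2) * dG 3 α 0)) + ((-1/2) * dG 0 α 3))) + (H ν 1 * ((((1/2) * dG α 3 1) + ((1/2) * dG 3 α 1)) + ((-1/2) * dG 1 α 3))) + (H ν 2 * ((((1/2) * dG α 3 2) + ((1/2) * dG 3 α 2)) + ((-1/2) * dG 2 α 3))) + (H ν 3 * ((((1/2) * dG α 3 3) + ((1/2) * dG 3 α 3)) + ((-1/2) * dG 3 α 3)))) + ((1/2) * (V ν * (dT α 3 + dT 3 α))))) * (hHs μ 3) + (((1/2) * (H ν 0 * dG α 0 0))) * (hHs 0 μ) + (((1/2) * (H ν 1 * dG α 0 1))) * (hHs 0 μ) + (((1/2) * (H ν 2 * dG α 0 2))) *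 (hHs 0 μ) + (((1/2) * (H ν 3 * dG α 0 3))) * (hHs 0 μ) + (((1/2) * (H ν 0 * dG α 1 0))) * (hHs 1 μ) + (((1/2) * (H ν 1 * dG α 1 1))) * (hHs 1 μ) + (((1/2) * (H ν 2 * dG α 1 2))) * (hHs 1 μ) + (((1/2) * (H ν 3 * dG α 1 3))) * (hHs 1 μ) + (((1/2) * (H ν 0 * dG α 2 0))) * (hHs 2 μ) + (((1/2) * (H ν 1 * dG α 2 1))) * (hHs 2 μ) + (((1/2) * (H ν 2 * dG α 2 2))) * (hHs 2 μ) + (((1/2) * (H ν 3 * dG α 2 3))) * (hHs 2 μ) + (((1/2) * (H ν 0 * dG α 3 0))) * (hHs 3 μ) + (((1/2) * (H ν 1 * dG α 3 1))) * (hHs 3 μ) + (((1/2) * (H ν 2 * dG α 3 2))) * (hHs 3 μ) + (((1/2) * (H ν 3 * dG α 3 3))) * (hHs 3 μ) + (((1/2) * H ν 0)) * (hD4 α μ 0) + (((1/2) * H ν 1)) * (hD4 α μ 1) + (((1/2) * H ν 2)) * (hD4 α μ 2) + (((1/2) * H ν 3)) * (hD4 α μ 3) + (((-1/2) * (H ν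 0 * dH α μ 0))) * (hGs 0 0) + (((-1/2) * (H ν 1 * dH α μ 0))) * (hGs 0 1) + (((-1/2) * (H ν 2 * dH α μ 0))) * (hGs 0 2) + (((-1/2) * (H ν 3 * dH α μ 0))) * (hGs 0 3) + (((-1/2) * (H ν 0 * dH α μ 1))) * (hGs 1 0) + (((-1/2) * (H ν 1 * dH α μ 1))) * (hGs 1 1) + (((-1/2) * (H ν 2 * dH α μ 1))) * (hGs 1 2) + (((-1/2) * (H ν 3 * dH α μ 1))) * (hGs 1 3) + (((-1/2) * (H ν 0 * dH α μ 2))) * (hGs 2 0) + (((-1/2) * (H ν 1 * dH α μ 2))) * (hGs 2 1) + (((-1/2) * (H ν 2 * dH α μ 2))) * (hGs 2 2) + (((-1/2) * (H ν 3 * dH α μ 2))) * (hGs 2 3) + (((-1/2) * (H ν 0 * dH α μ 3))) * (hGs 3 0) + (((-1/2) * (H ν 1 * dH α μ 3))) * (hGs 3 1) + (((-1/2) * (H ν 2 * dH α μ 3))) * (hGs 3 2) + (((-1/2) * (H ν 3 * dH α μ 3))) * (hGs 3 3) + (((-1/2) * 1)) * (hg2) + (((1/2) * V ν)) * (hD2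 α μ) + (((-1/2) * dV α μ)) * (hHT ν) + (((1/2) * (H ν 0 * H 0 μ))) * (hdGs 0 α 0) + (((1/2) * (H ν 1 * H 0 μ))) * (hdGs 0 α 1) + (((1/2) * (H ν 2 * H 0 μ))) * (hdGs 0 α 2) + (((1/2) * (H ν 3 * H 0 μ))) * (hdGs 0 α 3) + (((1/2) * (H ν 0 * H 1 μ))) * (hdGs 1 α 0) + (((1/2) * (H ν 1 * H 1 μ))) * (hdGs 1 α 1) + (((1/2) * (H ν 2 * H 1 μ))) * (hdGs 1 α 2) + (((1/2) * (H ν 3 * H 1 μ))) * (hdGs 1 α 3) + (((1/2) * (H ν 0 * H 2 μ))) * (hdGs 2 α 0) + (((1/2) * (H ν 1 * H 2 μ))) * (hdGs 2 α 1) + (((1/2) * (H ν 2 * H 2 μ))) * (hdGs 2 α 2) + (((1/2) * (H ν 3 * H 2 μ))) * (hdGs 2 α 3) + (((1/2) * (H ν 0 * H 3 μ))) * (hdGs 3 α 0) + (((1/2) * (H ν 1 * H 3 μ))) * (hdGs 3 α 1) + (((1/2) * (H ν 2 * H 3 μ))) * (hdGs 3 α 2) + (((1/2) * (H ν 3 *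 H 3 μ))) * (hdGs 3 α 3) + (((1/2) * H 0 μ)) * (hD4 0 ν α) + (((1/2) * H 1 μ)) * (hD4 1 ν α) + (((1/2) * H 2 μ)) * (hD4 2 ν α) + (((1/2) * H 3 μ)) * (hD4 3 ν α) + (((-1/2) * (H ν 0 * dG 0 α 0))) * (hHs 0 μ) + (((-1/2) * (H ν 1 * dG 1 α 0))) * (hHs 0 μ) + (((-1/2) * (H ν 2 * dG 2 α 0))) * (hHs 0 μ) + (((-1/2) * (H ν 3 * dG 3 α 0))) * (hHs 0 μ) + (((-1/2) * (H ν 0 * dG 0 α 1))) * (hHs 1 μ) + (((-1/2) * (H ν 1 * dG 1 α 1))) * (hHs 1 μ) + (((-1/2) * (H ν 2 * dG 2 α 1))) * (hHs 1 μ) + (((-1/2) * (H ν 3 * dG 3 α 1))) * (hHs 1 μ) + (((-1/2) * (H ν 0 * dG 0 α 2))) * (hHs 2 μ) + (((-1/2) * (H ν 1 * dG 1 α 2))) * (hHs 2 μ) + (((-1/2) * (H ν 2 * dG 2 α 2))) * (hHs 2 μ) + (((-1/2) * (H ν 3 * dG 3 α 2))) * (hHs 2 μ) + (((-1/2) * (H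 ν 0 * dG 0 α 3))) * (hHs 3 μ) + (((-1/2) * (H ν 1 * dG 1 α 3))) * (hHs 3 μ) + (((-1/2) * (H ν 2 * dG 2 α 3))) * (hHs 3 μ) + (((-1/2) * (H ν 3 * dG 3 α 3))) * (hHs 3 μ) + (((-1/2) * (H ν 0 * H μ 0))) * (hdGs 0 α 0) + (((-1/2) * (H ν 1 * H μ 0))) * (hdGs 1 α 0) + (((-1/2) * (H ν 2 * H μ 0))) * (hdGs 2 α 0) + (((-1/2) * (H ν 3 * H μ 0))) * (hdGs 3 α 0) + (((-1/2) * (H ν 0 * H μ 1))) * (hdGs 0 α 1) + (((-1/2) * (H ν 1 * H μ 1))) * (hdGs 1 α 1) + (((-1/2) * (H ν 2 * H μ 1))) * (hdGs 2 α 1) + (((-1/2) * (H ν 3 * H μ 1))) * (hdGs 3 α 1) + (((-1/2) * (H ν 0 * H μ 2))) * (hdGs 0 α 2) + (((-1/2) * (H ν 1 * H μ 2))) * (hdGs 1 α 2) + (((-1/2) * (H ν 2 * H μ 2))) * (hdGs 2 α 2) + (((-1/2) * (H ν 3 * H μ 2))) * (hdGs 3 α 2) + (((-1/2) * (H ν 0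 * H μ 3))) * (hdGs 0 α 3) + (((-1/2) * (H ν 1 * H μ 3))) * (hdGs 1 α 3) + (((-1/2) * (H ν 2 * H μ 3))) * (hdGs 2 α 3) + (((-1/2) * (H ν 3 * H μ 3))) * (hdGs 3 α 3) + (((-1/2) * H ν 0)) * (hD4 0 μ α) + (((-1/2) * H ν 1)) * (hD4 1 μ α) + (((-1/2) * H ν 2)) * (hD4 2 μ α) + (((-1/2) * H ν 3)) * (hD4 3 μ α) + (((1/2) * (V ν * dT α 0))) * (hHs 0 μ) + (((1/2) * (V ν * dT α 1))) * (hHs 1 μ) + (((1/2) * (V ν * dT α 2))) * (hHs 2 μ) + (((1/2) * (V ν * dT α 3))) * (hHs 3 μ) + (((1/2) * (T α * dV 0 ν))) * (hHs μ 0) + (((1/2) * (T α * dV 1 ν))) * (hHs μ 1) + (((1/2) * (T α * dV 2 ν))) * (hHs μ 2) + (((1/2) * (T α * dV 3 ν))) * (hHs μ 3) + (((1/2) * (T α * dV 0 μ))) * (hHs ν 0) + (((1/2) * (T α * dV 1 μ))) * (hHs ν 1) + (((1/2) * (T α * dV 2 μ))) * (hHs ν 2) + (((1/2) * (T α * dV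 3 μ))) * (hHs ν 3) + (((-1/2) * (dH 0 μ 0 * G 0 α))) * (hHs 0 ν) + (((-1/2) * (dH 0 μ 1 * G 1 α))) * (hHs 0 ν) + (((-1/2) * (dH 0 μ 2 * G 2 α))) * (hHs 0 ν) + (((-1/2) * (dH 0 μ 3 * G 3 α))) * (hHs 0 ν) + (((-1/2) * (dH 1 μ 0 * G 0 α))) * (hHs 1 ν) + (((-1/2) * (dH 1 μ 1 * G 1 α))) * (hHs 1 ν) + (((-1/2) * (dH 1 μ 2 * G 2 α))) * (hHs 1 ν) + (((-1/2) * (dH 1 μ 3 * G 3 α))) * (hHs 1 ν) + (((-1/2) * (dH 2 μ 0 * G 0 α))) * (hHs 2 ν) + (((-1/2) * (dH 2 μ 1 * G 1 α))) * (hHs 2 ν) + (((-1/2) * (dH 2 μ 2 * G 2 α))) * (hHs 2 ν) + (((-1/2) * (dH 2 μ 3 * G 3 α))) * (hHs 2 ν) + (((-1/2) * (dH 3 μ 0 * G 0 α))) * (hHs 3 ν) + (((-1/2) * (dH 3 μ 1 * G 1 α))) * (hHs 3 ν) + (((-1/2) * (dH 3 μ 2 * G 2 α))) * (hHs 3 ν)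 + (((-1/2) * (dH 3 μ 3 * G 3 α))) * (hHs 3 ν) + (((1/2) * (dH 0 ν 0 * G 0 α))) * (hHs μ 0) + (((1/2) * (dH 0 ν 1 * G 1 α))) * (hHs μ 0) + (((1/2) * (dH 0 ν 2 * G 2 α))) * (hHs μ 0) + (((1/2) * (dH 0 ν 3 * G 3 α))) * (hHs μ 0) + (((1/2) * (dH 1 ν 0 * G 0 α))) * (hHs μ 1) + (((1/2) * (dH 1 ν 1 * G 1 α))) * (hHs μ 1) + (((1/2) * (dH 1 ν 2 * G 2 α))) * (hHs μ 1) + (((1/2) * (dH 1 ν 3 * G 3 α))) * (hHs μ 1) + (((1/2) * (dH 2 ν 0 * G 0 α))) * (hHs μ 2) + (((1/2) * (dH 2 ν 1 * G 1 α))) * (hHs μ 2) + (((1/2) * (dH 2 ν 2 * G 2 α))) * (hHs μ 2) + (((1/2) * (dH 2 ν 3 * G 3 α))) * (hHs μ 2) + (((1/2) * (dH 3 ν 0 * G 0 α))) * (hHs μ 3) + (((1/2) * (dH 3 ν 1 * G 1 α))) * (hHs μ 3) + (((1/2) * (dH 3 ν 2 * G 2 α))) * (hHs μ 3) + (((1/2)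 * (dH 3 ν 3 * G 3 α))) * (hHs μ 3) + (((1/2) * 1)) * (hdHs α μ ν)

set_option maxHeartbeats 1000000 in
lemma lemE (hGV : ∀ i, ∑ j, G i j * V j = 0)
    (hD3 : ∀ b m, ∑ s, (dG b m s * V s + G m s * dV b s) = 0) (μ : Fin 4) :
    ∑ σ, ((1/2) * (∑ ρ, V ρ * dG ρ μ σ + ∑ ρ, G ρ σ * dV μ ρ + ∑ ρ, G μ ρ * dV σ ρ)) * V σ = 0 := by
  simp only [Fin.sum_univ_four] at hGV hD3 ⊢
  linear_combination (((1/2) * dV μ 0)) * (hGV 0) + (((1/2) * dV μ 1)) * (hGV 1) + (((1/2) * dV μ 2)) * (hGV 2) + (((1/2) * dV μ 3)) * (hGV 3) + (((1/2) * V 0)) * (hD3 0 μ) + (((1/2) * V 1)) * (hD3 1 μ) + (((1/2) * V 2)) * (hD3 2 μ) + (((1/2) * V 3)) * (hD3 3 μ)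

set_option maxHeartbeats 1000000 in
lemma lemSym (hGs : ∀ i j, G i j = G j i) (hdGs : ∀ b i j, dG b i j = dG b j i)
    (μ ν : Fin 4) : ((1/2) * (∑ ρ, V ρ * dG ρ μ ν + ∑ ρ, G ρ ν * dV μ ρ + ∑ ρ, G μ ρ * dV ν ρ)) = ((1/2) * (∑ ρ, V ρ * dG ρ ν μ + ∑ ρ, G ρ μ * dV ν ρ + ∑ ρ, G ν ρ * dV μ ρ)) := by
  simp only [Fin.sum_univ_four] at *
  linear_combination (((1/2) * V 0)) * (hdGs 0 μ ν) + (((1/2) * V 1)) * (hdGs 1 μ ν) + (((1/2) * V 2)) * (hdGs 2 μ ν) + (((1/2) * V 3)) * (hdGs 3 μ ν) + (((1/2) * dV μ 0)) * (hGs 0 ν) + (((1/2) * dV μ 1)) * (hGs 1 ν) + (((1/2) * dV μ 2)) * (hGs 2 ν) + (((1/2) * dV μ 3)) * (hGs 3 ν) + (((1/2) * dV ν 0)) * (hGs μ 0) + (((1/2) * dV ν 1)) * (hGs μ 1) + (((1/2) * dV ν 2)) * (hGs μ 2) + (((1/2) * dV ν 3)) * (hGs μ 3)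

end AlgebraCore

set_option maxHeartbeats 1000000 in
/-- Non-metricity of the connection `^{v,τ}Γ`: (a) ∇_μ τ_ν = ω_{μν};
(b) ∇_α γ_{μν} = −(τ_μ Θ_{να} + τ_ν Θ_{μα}); (c) ∇_μ v^ν = Θ_{μσ} h^{σν} − v^ν ω_{μσ} v^σ;
(d) ∇_α h^{μν} = (v^μ h^{νσ} + v^ν h^{μσ}) ω_{σα}; moreover Θ_{μν} v^ν = 0.
Consequently `^{v,τ}Γ` is metric for `(τ, h)` iff ω = 0, and metric for `γ` iff Θ = 0. -/
theorem compat_connection_nonmetricity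
    (U : Set Vec4) (hU : IsOpen U) (hne : U.Nonempty)
    (τ v : Tens1) (γ h : Tens2)
    (hτs : Smooth1 τ U) (hvs : Smooth1 v U) (hγs : Smooth2 γ U) (hhs : Smooth2 h U)
    (hdual : DualityOn τ v γ h U) :
    (∀ x ∈ U,
      (∀ μ ν, covOne (compatConn v τ γ h) τ x μ ν = omega2 τ x μ ν) ∧
      (∀ α μ ν, covLow (compatConn v τ γ h) γ x α μ ν
        = -(τ x μ * theta2 v γ x ν α + τ x ν * theta2 v γ x μ α)) ∧
      (∀ μ ν, covVec (compatConn v τ γ h) v x μ ν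
        = (∑ σ, theta2 v γ x μ σ * h x σ ν) - v x ν * ∑ σ, omega2 τ x μ σ * v x σ) ∧
      (∀ α μ ν, covUp (compatConn v τ γ h) h x α μ ν
        = ∑ σ, (v x μ * h x ν σ + v x ν * h x μ σ) * omega2 τ x σ α) ∧
      (∀ μ, ∑ ν, theta2 v γ x μ ν * v x ν = 0)) ∧
    (((∀ x ∈ U, ∀ μ ν, covOne (compatConn v τ γ h) τ x μ ν = 0) ∧
        (∀ x ∈ U, ∀ α μ ν, covUp (compatConn v τ γ h) h x α μ ν = 0))
      ↔ (∀ x ∈ U, ∀ μ ν, omega2 τ x μ ν = 0)) ∧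
    ((∀ x ∈ U, ∀ α μ ν, covLow (compatConn v τ γ h) γ x α μ ν = 0)
      ↔ (∀ x ∈ U, ∀ μ ν, theta2 v γ x μ ν = 0)) := by
  -- differentiability of all fields at points of U
  have dτ : ∀ x ∈ U, ∀ i, DifferentiableAt ℝ (fun y => τ y i) x := fun x hx i =>
    ((hτs i).differentiableOn (by simp)).differentiableAt (hU.mem_nhds hx)
  have dv : ∀ x ∈ U, ∀ i, DifferentiableAt ℝ (fun y => v y i) x := fun x hx i =>
    ((hvs i).differentiableOn (by simp)).differentiableAt (hU.mem_nhds hx)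
  have dγ : ∀ x ∈ U, ∀ i j, DifferentiableAt ℝ (fun y => γ y i j) x := fun x hx i j =>
    ((hγs i j).differentiableOn (by simp)).differentiableAt (hU.mem_nhds hx)
  have dh : ∀ x ∈ U, ∀ i j, DifferentiableAt ℝ (fun y => h y i j) x := fun x hx i j =>
    ((hhs i j).differentiableOn (by simp)).differentiableAt (hU.mem_nhds hx)
  -- pointwise algebraic data and derived derivative identities
  have key : ∀ x ∈ U,
      (∀ μ ν, covOne (compatConn v τ γ h) τ x μ ν = omega2 τ x μ ν) ∧
      (∀ α μ ν, covLow (compatConn v τ γ h) γ x α μ ν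
        = -(τ x μ * theta2 v γ x ν α + τ x ν * theta2 v γ x μ α)) ∧
      (∀ μ ν, covVec (compatConn v τ γ h) v x μ ν
        = (∑ σ, theta2 v γ x μ σ * h x σ ν) - v x ν * ∑ σ, omega2 τ x μ σ * v x σ) ∧
      (∀ α μ ν, covUp (compatConn v τ γ h) h x α μ ν
        = ∑ σ, (v x μ * h x ν σ + v x ν * h x μ σ) * omega2 τ x σ α) ∧
      ((∀ μ, ∑ ν, theta2 v γ x μ ν * v x ν = 0) ∧
       (∀ μ ν, theta2 v γ x μ ν = theta2 v γ x ν μ)) := by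
    intro x hx
    obtain ⟨hGs, hHs, hTV, hHT, hGV, hHG⟩ := hdual x hx
    have hD1 : ∀ b, ∑ i, (pd b (fun y => τ y i) x * v x i
        + τ x i * pd b (fun y => v y i) x) = 0 := by
      intro b
      have h1 : (fun y => ∑ i, τ y i * v y i) =ᶠ[nhds x] (fun _ => (1:ℝ)) :=
        Filter.eventuallyEq_of_mem (hU.mem_nhds hx) (fun y hy => (hdual y hy).2.2.1)
      calc ∑ i, (pd b (fun y => τ y i) x * v x i + τ x i * pd b (fun y => v y i) x)
          = pd b (fun y => ∑ i, τ y i * v y i) x :=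
            (pd_sum_mul b τ v x (dτ x hx) (dv x hx)).symm
        _ = pd b (fun _ => (1:ℝ)) x := pd_congr h1 b
        _ = 0 := pd_const 1 b x
    have hD2 : ∀ b n, ∑ s, (pd b (fun y => h y n s) x * τ x s
        + h x n s * pd b (fun y => τ y s) x) = 0 := by
      intro b n
      have h1 : (fun y => ∑ s, h y n s * τ y s) =ᶠ[nhds x] (fun _ => (0:ℝ)) :=
        Filter.eventuallyEq_of_mem (hU.mem_nhds hx) (fun y hy => (hdual y hy).2.2.2.1 n)
      calc ∑ s, (pd b (fun y => h y n s) x * τ x s + h x n s * pd b (fun y => τ y s) x)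
          = pd b (fun y => ∑ s, h y n s * τ y s) x :=
            (pd_sum_mul b (fun y s => h y n s) τ x (dh x hx n) (dτ x hx)).symm
        _ = pd b (fun _ => (0:ℝ)) x := pd_congr h1 b
        _ = 0 := pd_const 0 b x
    have hD3 : ∀ b m, ∑ s, (pd b (fun y => γ y m s) x * v x s
        + γ x m s * pd b (fun y => v y s) x) = 0 := by
      intro b m
      have h1 : (fun y => ∑ s, γ y m s * v y s) =ᶠ[nhds x] (fun _ => (0:ℝ)) :=
        Filter.eventuallyEq_of_mem (hU.mem_nhds hx) (fun y hy => (hdual y hy).2.2.2.2.1 m)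
      calc ∑ s, (pd b (fun y => γ y m s) x * v x s + γ x m s * pd b (fun y => v y s) x)
          = pd b (fun y => ∑ s, γ y m s * v y s) x :=
            (pd_sum_mul b (fun y s => γ y m s) v x (dγ x hx m) (dv x hx)).symm
        _ = pd b (fun _ => (0:ℝ)) x := pd_congr h1 b
        _ = 0 := pd_const 0 b x
    have hD4 : ∀ b m n, ∑ s, (pd b (fun y => h y m s) x * γ x s n
        + h x m s * pd b (fun y => γ y s n) x)
        = -(pd b (fun y => v y m) x * τ x n + v x m * pd b (fun y => τ y n) x) := by
      intro b m n
      have h1 : (fun y => ∑ s, h y m s * γ y s n)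
          =ᶠ[nhds x] (fun y => kron m n - v y m * τ y n) :=
        Filter.eventuallyEq_of_mem (hU.mem_nhds hx) (fun y hy => (hdual y hy).2.2.2.2.2 m n)
      calc ∑ s, (pd b (fun y => h y m s) x * γ x s n + h x m s * pd b (fun y => γ y s n) x)
          = pd b (fun y => ∑ s, h y m s * γ y s n) x :=
            (pd_sum_mul b (fun y s => h y m s) (fun y s => γ y s n) x
              (dh x hx m) (fun i => dγ x hx i n)).symm
        _ = pd b (fun y => kron m n - v y m * τ y n) x := pd_congr h1 b
        _ = -(pd b (fun y => v y m) x * τ x n + v x m * pd b (fun y => τ y n) x) :=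
            pd_const_sub_mul (kron m n) b x (dv x hx m) (dτ x hx n)
    have hdGs : ∀ b i j, pd b (fun y => γ y i j) x = pd b (fun y => γ y j i) x :=
      fun b i j => pd_congr (Filter.eventuallyEq_of_mem (hU.mem_nhds hx)
        (fun y hy => (hdual y hy).1 i j)) b
    have hdHs : ∀ b i j, pd b (fun y => h y i j) x = pd b (fun y => h y j i) x :=
      fun b i j => pd_congr (Filter.eventuallyEq_of_mem (hU.mem_nhds hx)
        (fun y hy => (hdual y hy).2.1 i j)) b
    refine ⟨?_, ?_, ?_, ?_, ?_, ?_⟩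
    · intro μ ν
      exact lemA (τ x) (v x) (h x) (fun b i => pd b (fun y => τ y i) x)
        (fun b i j => pd b (fun y => γ y i j) x) hHs hTV hHT μ ν
    · intro α μ ν
      exact lemB (τ x) (v x) (γ x) (h x) (fun b i => pd b (fun y => τ y i) x)
        (fun b i => pd b (fun y => v y i) x)
        (fun b i j => pd b (fun y => γ y i j) x) hGs hHs hGV hHG hD3 hdGs α μ ν
    · intro μ ν
      exact lemC (τ x) (v x) (γ x) (h x) (fun b i => pd b (fun y => τ y i) x)
        (fun b i => pd b (fun y => v y i) x)
        (fun b i j => pd b (fun y => γ y i j) x) hGs hHs hHG hD1 hD3 hdGs μ ν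
    · intro α μ ν
      exact lemD (τ x) (v x) (γ x) (h x) (fun b i => pd b (fun y => τ y i) x)
        (fun b i => pd b (fun y => v y i) x)
        (fun b i j => pd b (fun y => γ y i j) x)
        (fun b i j => pd b (fun y => h y i j) x)
        hGs hHs hHT hHG hD2 hD4 hdGs hdHs α μ ν
    · intro μ
      exact lemE (v x) (γ x) (fun b i => pd b (fun y => v y i) x)
        (fun b i j => pd b (fun y => γ y i j) x) hGV hD3 μ
    · intro μ ν
      exact lemSym (v x) (γ x) (fun b i => pd b (fun y => v y i) x)
        (fun b i j => pd b (fun y => γ y i j) x) hGs hdGs μ ν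
  refine ⟨fun x hx => ⟨(key x hx).1, (key x hx).2.1, (key x hx).2.2.1, (key x hx).2.2.2.1,
      (key x hx).2.2.2.2.1⟩, ?_, ?_⟩
  · constructor
    · rintro ⟨h1, -⟩ x hx μ ν
      rw [← (key x hx).1 μ ν]; exact h1 x hx μ ν
    · intro hω
      constructor
      · intro x hx μ ν; rw [(key x hx).1 μ ν]; exact hω x hx μ ν
      · intro x hx α μ ν; rw [(key x hx).2.2.2.1 α μ ν]
        refine Finset.sum_eq_zero fun σ _ => ?_
        rw [hω x hx σ α, mul_zero]
  · constructor
    · intro h0 x hx μ ν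
      obtain ⟨hGs, hHs, hTV, hHT, hGV, hHG⟩ := hdual x hx
      have h2 : ∀ σ, τ x σ * theta2 v γ x μ ν + τ x μ * theta2 v γ x σ ν = 0 := by
        intro σ
        have hb := (key x hx).2.1 ν σ μ
        rw [h0 x hx ν σ μ] at hb
        linarith
      have h3 : ∑ σ, theta2 v γ x ν σ * v x σ = 0 := (key x hx).2.2.2.2.1 ν
      have h4 : ∀ σ, theta2 v γ x σ ν = theta2 v γ x ν σ :=
        fun σ => (key x hx).2.2.2.2.2 σ ν
      simp only [Fin.sum_univ_four] at h3 hTV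
      linear_combination (v x 0) * h2 0 + (v x 1) * h2 1 + (v x 2) * h2 2 + (v x 3) * h2 3
        - (theta2 v γ x μ ν) * hTV - (τ x μ) * h3
        - (τ x μ * v x 0) * h4 0 - (τ x μ * v x 1) * h4 1
        - (τ x μ * v x 2) * h4 2 - (τ x μ * v x 3) * h4 3
    · intro hθ x hx α μ ν
      rw [(key x hx).2.1 α μ ν, hθ x hx ν α, hθ x hx μ α]
      ring
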